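/- Mutual entropy is nonnegative (subadditivity of von Neumann entropy): for every density matrix D on ℂ^m ⊗ ℂ^n with reduced density matrices D_A and D_B, one has S(D) ≤ S(D_A) + S(D_B), i.e. I_D(A:B) ≥ 0, with equality in the subadditivity inequality exactly when D = D_A ⊗ D_B. -/

import Mathlib

open scoped Kronecker ComplexOrder
open Matrix

noncomputable section

namespace TAL

/-- A density matrix: positive semidefinite with trace `1`. -/
def IsDensityMatrix {k : Type*} [Fintype k] [DecidableEq k] (D : Matrix k k ℂ) : Prop :=
  D.PosSemidef ∧ D.trace = 1

/-- Functional calculus for Hermitian matrices via the spectral decomposition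
(junk value `0` on non-Hermitian matrices). -/
def hermCalc {k : Type*} [Fintype k] [DecidableEq k] (f : ℝ → ℝ) (A : Matrix k k ℂ) :
    Matrix k k ℂ :=
  if hA : A.IsHermitian then
    (hA.eigenvectorUnitary : Matrix k k ℂ) *
      Matrix.diagonal (fun i => (f (hA.eigenvalues i) : ℂ)) *
        star (hA.eigenvectorUnitary : Matrix k k ℂ)
  else 0

/-- Matrix logarithm via the spectral decomposition. -/
def matLog {k : Type*} [Fintype k] [DecidableEq k] (A : Matrix k k ℂ) : Matrix k k ℂ :=
  hermCalc Real.log A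

/-- The von Neumann entropy `S(D) = -Tr (D log D)`, computed through the eigenvalues,
with the convention `0 * log 0 = 0` (junk value `0` on non-Hermitian matrices). -/
def vnEntropy {k : Type*} [Fintype k] [DecidableEq k] (A : Matrix k k ℂ) : ℝ :=
  if hA : A.IsHermitian then ∑ i, Real.negMulLog (hA.eigenvalues i) else 0

/-- The Umegaki relative entropy `S(D | E) = Tr (D (log D - log E))`. -/
def relEntropy {k : Type*} [Fintype k] [DecidableEq k] (D E : Matrix k k ℂ) : ℝ :=
  ((D * (matLog D - matLog E)).trace).re

/-- Partial trace over the second (right) tensor factor. -/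
def ptraceR {k₁ k₂ : Type*} [Fintype k₂] (D : Matrix (k₁ × k₂) (k₁ × k₂) ℂ) :
    Matrix k₁ k₁ ℂ :=
  Matrix.of fun i j => ∑ s : k₂, D (i, s) (j, s)

/-- Partial trace over the first (left) tensor factor. -/
def ptraceL {k₁ k₂ : Type*} [Fintype k₁] (D : Matrix (k₁ × k₂) (k₁ × k₂) ℂ) :
    Matrix k₂ k₂ ℂ :=
  Matrix.of fun i j => ∑ s : k₁, D (s, i) (s, j)

/-- The mutual entropy `I_D(A:B) = S(D_A) + S(D_B) - S(D)`. -/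
def mutualEntropy {k₁ k₂ : Type*} [Fintype k₁] [Fintype k₂] [DecidableEq k₁] [DecidableEq k₂]
    (D : Matrix (k₁ × k₂) (k₁ × k₂) ℂ) : ℝ :=
  vnEntropy (ptraceR D) + vnEntropy (ptraceL D) - vnEntropy D

/-- The Gibbs density matrix `e^{-β H} / Tr(e^{-β H})`. -/
def gibbs {k : Type*} [Fintype k] [DecidableEq k] (β : ℝ) (H : Matrix k k ℂ) :
    Matrix k k ℂ :=
  (NormedSpace.exp ((-(β : ℂ)) • H)).trace⁻¹ • NormedSpace.exp ((-(β : ℂ)) • H)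

/-- The free energy functional `F(D) = Tr(H D) - β⁻¹ S(D)` (real part of the trace). -/
def freeEnergy {k : Type*} [Fintype k] [DecidableEq k] (β : ℝ) (H D : Matrix k k ℂ) : ℝ :=
  ((H * D).trace).re - β⁻¹ * vnEntropy D

/-- The ℓ²-operator norm of a matrix. -/
def opNorm {k : Type*} [Fintype k] [DecidableEq k] (A : Matrix k k ℂ) : ℝ :=
  ‖(Matrix.toEuclideanCLM (𝕜 := ℂ) A : EuclideanSpace ℂ k →L[ℂ] EuclideanSpace ℂ k)‖

/-- The trace norm `‖X‖₁ = Tr ((X* X)^{1/2})`. -/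
def traceNorm {k : Type*} [Fintype k] [DecidableEq k] (X : Matrix k k ℂ) : ℝ :=
  ((((Matrix.posSemidef_conjTranspose_mul_self X).1.eigenvectorUnitary : Matrix k k ℂ) *
      Matrix.diagonal (((↑) : ℝ → ℂ) ∘ Real.sqrt ∘ (Matrix.posSemidef_conjTranspose_mul_self X).1.eigenvalues) *
        star ((Matrix.posSemidef_conjTranspose_mul_self X).1.eigenvectorUnitary : Matrix k k ℂ)).trace).re


/-- The perturbed density matrix `D^h = e^{log D + h} / Tr(e^{log D + h})`. -/
def pert {k : Type*} [Fintype k] [DecidableEq k] (D h : Matrix k k ℂ) : Matrix k k ℂ :=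
  (NormedSpace.exp (matLog D + h)).trace⁻¹ • NormedSpace.exp (matLog D + h)

/-!
Diagonalise `D = U diag(p) U*` and the marginals `D_A = U_A diag(a) U_A*`,
`D_B = U_B diag(b) U_B*`, so that `D_A ⊗ D_B` is diagonal in the basis `V = U_A ⊗ U_B`, with
eigenvalues `q = a ⊗ b`. The diagonal `r` of `V* D V` is `p` mixed by the doubly stochastic matrix
`|(U* V)_{αβ}|²`, and its two marginals are `a` and `b`; hence `S(D_A) + S(D_B) = -∑ r log q`.
Klein's inequality `∑ r log q ≤ ∑ p log p` follows by summing `x log x - x log y - x + y ≥ 0`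
against the mixing matrix. Equality forces `p_α = q_β` wherever `(U* V)_{αβ} ≠ 0`, that is
`D = V diag(q) V* = D_A ⊗ D_B`; conversely the entropy is additive on tensor products of states.
-/

open Finset Real InformationTheory

section Klein

lemma mul_klFun_div {x y : ℝ} (hy : y ≠ 0) :
    y * klFun (x / y) = x * log x - x * log y - x + y := by
  rcases eq_or_ne x 0 with rfl | hx
  · simp [klFun_apply]
  rw [klFun_apply, log_div hx hy]
  field_simp
  ring

lemma mul_log_sub_mul_log_sub_add_nonneg {x y : ℝ} (hx : 0 ≤ x) (hy : 0 ≤ y)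
    (hxy : y = 0 → x = 0) : 0 ≤ x * log x - x * log y - x + y := by
  rcases hy.eq_or_lt with rfl | hy
  · simp [hxy rfl]
  rw [← mul_klFun_div hy.ne']
  exact mul_nonneg hy.le (klFun_nonneg (div_nonneg hx hy.le))

lemma eq_of_mul_log_sub_mul_log_sub_add_eq_zero {x y : ℝ} (hx : 0 ≤ x) (hy : 0 ≤ y)
    (hxy : y = 0 → x = 0) (h : x * log x - x * log y - x + y = 0) : x = y := by
  rcases hy.eq_or_lt with rfl | hy
  · exact hxy rfl
  rw [← mul_klFun_div hy.ne', mul_eq_zero, klFun_eq_zero_iff (div_nonneg hx hy.le),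
    div_eq_one_iff_eq hy.ne'] at h
  exact h.resolve_left hy.ne'

variable {ι : Type*} [Fintype ι] [DecidableEq ι] {P : Matrix ι ι ℝ} {p q : ι → ℝ}

lemma sum_mul_log_sub_sum_vecMul_mul_log (hP : P ∈ doublyStochastic ℝ ι)
    (hpq : ∑ i, p i = ∑ i, q i) :
    ∑ i, p i * log (p i) - ∑ j, (p ᵥ* P) j * log (q j) =
      ∑ i, ∑ j, P i j * (p i * log (p i) - p i * log (q j) - p i + q j) := by
  have hrow := sum_row_of_mem_doublyStochastic hP
  have hcol := sum_col_of_mem_doublyStochastic hP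
  simp only [mul_sub, mul_add, sum_add_distrib, sum_sub_distrib, vecMul, dotProduct, sum_mul]
  rw [sum_comm (f := fun i j => P i j * q j), sum_comm (f := fun j i => p i * P i j * log (q j))]
  simp only [← sum_mul, hrow, hcol, hpq, one_mul, sub_add_cancel]
  congr 1
  exact sum_congr rfl fun i _ => sum_congr rfl fun j _ => by ring

lemma eq_zero_of_vecMul_eq_zero (hP : P ∈ doublyStochastic ℝ ι) (hp : 0 ≤ p) {i j : ι}
    (hPij : P i j ≠ 0) (h : (p ᵥ* P) j = 0) : p i = 0 := by
  have hterms := (sum_eq_zero_iff_of_nonneg fun k _ => mul_nonneg (hp k) (hP.1 k j)).1 h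
  exact (mul_eq_zero.1 (hterms i (mem_univ i))).resolve_right hPij

variable (hP : P ∈ doublyStochastic ℝ ι) (hp : 0 ≤ p) (hq : 0 ≤ q)
  (hsupp : ∀ j, q j = 0 → (p ᵥ* P) j = 0)
include hP hp hq hsupp

lemma mul_mul_log_sub_mul_log_sub_add_nonneg (i j : ι) :
    0 ≤ P i j * (p i * log (p i) - p i * log (q j) - p i + q j) := by
  by_cases hPij : P i j = 0
  · simp [hPij]
  exact mul_nonneg (hP.1 i j) (mul_log_sub_mul_log_sub_add_nonneg (hp i) (hq j)
    fun hqj => eq_zero_of_vecMul_eq_zero hP hp hPij (hsupp j hqj))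

variable (hpq : ∑ i, p i = ∑ i, q i)
include hpq

theorem sum_vecMul_mul_log_le : ∑ j, (p ᵥ* P) j * log (q j) ≤ ∑ i, p i * log (p i) := by
  have hgap := sum_mul_log_sub_sum_vecMul_mul_log hP hpq
  have : 0 ≤ ∑ i, ∑ j, P i j * (p i * log (p i) - p i * log (q j) - p i + q j) :=
    sum_nonneg fun i _ => sum_nonneg fun j _ =>
      mul_mul_log_sub_mul_log_sub_add_nonneg hP hp hq hsupp i j
  linarith

theorem eq_zero_or_eq_of_sum_vecMul_mul_log_eq
    (h : ∑ j, (p ᵥ* P) j * log (q j) = ∑ i, p i * log (p i)) (i j : ι) :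
    P i j = 0 ∨ p i = q j := by
  have hterm := mul_mul_log_sub_mul_log_sub_add_nonneg hP hp hq hsupp
  have hgap := sum_mul_log_sub_sum_vecMul_mul_log hP hpq
  rw [h, sub_self, eq_comm,
    sum_eq_zero_iff_of_nonneg fun i _ => sum_nonneg fun j _ => hterm i j] at hgap
  have hij := (sum_eq_zero_iff_of_nonneg fun j _ => hterm i j).1 (hgap i (mem_univ i)) j
    (mem_univ j)
  refine or_iff_not_imp_left.2 fun hPij => ?_
  exact eq_of_mul_log_sub_mul_log_sub_add_eq_zero (hp i) (hq j)
    (fun hqj => eq_zero_of_vecMul_eq_zero hP hp hPij (hsupp j hqj))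
    ((mul_eq_zero.1 hij).resolve_left hPij)

end Klein

section MatrixKlein

variable {ι : Type*} [Fintype ι] [DecidableEq ι]

lemma normSq_mem_doublyStochastic {W : Matrix ι ι ℂ} (hW : W ∈ unitaryGroup ι ℂ) :
    (of fun i j => Complex.normSq (W i j)) ∈ doublyStochastic ℝ ι := by
  refine mem_doublyStochastic_iff_sum.2
    ⟨fun i j => Complex.normSq_nonneg _, fun i => ?_, fun j => ?_⟩
  · have h := congr_fun₂ (mem_unitaryGroup_iff.1 hW) i i
    simp only [mul_apply, star_apply, RCLike.star_def, Complex.mul_conj, one_apply_eq] at h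
    exact_mod_cast h
  · have h := congr_fun₂ (mem_unitaryGroup_iff'.1 hW) j j
    simp only [mul_apply, star_apply, RCLike.star_def, ← Complex.normSq_eq_conj_mul_self,
      one_apply_eq] at h
    exact_mod_cast h

lemma conj_diagonal_apply_self (W : Matrix ι ι ℂ) (p : ι → ℝ) (j : ι) :
    (star W * diagonal (fun i => (p i : ℂ)) * W) j j =
      ((p ᵥ* of fun i j => Complex.normSq (W i j)) j : ℝ) := by
  simp only [mul_apply, star_apply, RCLike.star_def, vecMul, dotProduct, of_apply, diagonal_apply,
    mul_ite, mul_zero, sum_ite_eq', mem_univ, if_true]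
  push_cast
  exact sum_congr rfl fun i _ => by rw [Complex.normSq_eq_conj_mul_self]; ring

lemma conj_conj_diagonal_apply_self (U V : Matrix ι ι ℂ) (p : ι → ℝ) (j : ι) :
    (star V * (U * diagonal (fun i => (p i : ℂ)) * star U) * V) j j =
      ((p ᵥ* of fun i j => Complex.normSq ((star U * V) i j)) j : ℝ) := by
  rw [← conj_diagonal_apply_self, star_mul, star_star]
  simp only [Matrix.mul_assoc]

lemma conj_diagonal_eq_conj_diagonal {U V : Matrix ι ι ℂ} (hU : U ∈ unitaryGroup ι ℂ)
    (hV : V ∈ unitaryGroup ι ℂ) {p q : ι → ℝ} (h : ∀ i j, (star U * V) i j = 0 ∨ p i = q j) :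
    U * diagonal (fun i => (p i : ℂ)) * star U = V * diagonal (fun j => (q j : ℂ)) * star V := by
  have hcomm : diagonal (fun i => (p i : ℂ)) * (star U * V) =
      (star U * V) * diagonal (fun j => (q j : ℂ)) := by
    ext i j
    rw [diagonal_mul, mul_diagonal]
    rcases h i j with h | h <;> simp [h, mul_comm]
  calc U * diagonal (fun i => (p i : ℂ)) * star U
      = U * (diagonal (fun i => (p i : ℂ)) * (star U * V)) * star V := by
        simp only [Matrix.mul_assoc, mem_unitaryGroup_iff.1 hV, Matrix.mul_one]
    _ = V * diagonal (fun j => (q j : ℂ)) * star V := by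
        rw [hcomm, ← Matrix.mul_assoc, ← Matrix.mul_assoc, mem_unitaryGroup_iff.1 hU,
          Matrix.one_mul]

variable {D U V : Matrix ι ι ℂ} (hU : U ∈ unitaryGroup ι ℂ) (hV : V ∈ unitaryGroup ι ℂ)
  {p q : ι → ℝ} (hp : 0 ≤ p) (hq : 0 ≤ q) (hpq : ∑ i, p i = ∑ i, q i)
  (hD : D = U * diagonal (fun i => (p i : ℂ)) * star U)
  (hsupp : ∀ j, q j = 0 → ((star V * D * V) j j).re = 0)
include hU hV hp hq hpq hD hsupp

/-- Klein's inequality `Tr D log E ≤ Tr D log D`, for `E = V diag(q) V*` of the same trace. -/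
theorem sum_re_conj_mul_log_le :
    ∑ j, ((star V * D * V) j j).re * log (q j) ≤ ∑ i, p i * log (p i) := by
  subst hD
  simp only [conj_conj_diagonal_apply_self, Complex.ofReal_re] at hsupp ⊢
  exact sum_vecMul_mul_log_le (normSq_mem_doublyStochastic (mul_mem (Unitary.star_mem hU) hV))
    hp hq hsupp hpq

theorem eq_conj_diagonal_of_sum_re_conj_mul_log_eq
    (h : ∑ j, ((star V * D * V) j j).re * log (q j) = ∑ i, p i * log (p i)) :
    D = V * diagonal (fun j => (q j : ℂ)) * star V := by
  subst hD
  simp only [conj_conj_diagonal_apply_self, Complex.ofReal_re] at hsupp h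
  refine conj_diagonal_eq_conj_diagonal hU hV fun i j => ?_
  simpa only [of_apply, Complex.normSq_eq_zero] using eq_zero_or_eq_of_sum_vecMul_mul_log_eq
    (normSq_mem_doublyStochastic (mul_mem (Unitary.star_mem hU) hV)) hp hq hsupp hpq h i j

end MatrixKlein

section Spectrum

variable {ι : Type*} [Fintype ι] [DecidableEq ι]

lemma star_eigenvectorUnitary_mul_mul {A : Matrix ι ι ℂ} (hA : A.IsHermitian) :
    star (hA.eigenvectorUnitary : Matrix ι ι ℂ) * A * hA.eigenvectorUnitary =
      diagonal (fun i => (hA.eigenvalues i : ℂ)) := by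
  simpa only [RCLike.ofReal_eq_complex_ofReal, Function.comp_def, Unitary.conjStarAlgAut_apply,
    Unitary.coe_star, star_star] using hA.conjStarAlgAut_star_eigenvectorUnitary

lemma sum_eigenvalues_eq_one {A : Matrix ι ι ℂ} (hA : A.IsHermitian) (hA₁ : A.trace = 1) :
    ∑ i, hA.eigenvalues i = 1 := by
  have h := hA.trace_eq_sum_eigenvalues.symm.trans hA₁
  rw [RCLike.ofReal_eq_complex_ofReal] at h
  exact_mod_cast h

open Polynomial in
lemma charpoly_conj_diagonal {V : Matrix ι ι ℂ} (hV : V ∈ unitaryGroup ι ℂ) (d : ι → ℝ) :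
    (V * diagonal (fun i => (d i : ℂ)) * star V).charpoly = ∏ i, (X - C (d i : ℂ)) := by
  rw [charpoly_mul_comm, ← Matrix.mul_assoc, mem_unitaryGroup_iff'.1 hV, Matrix.one_mul,
    charpoly_diagonal]

lemma map_eigenvalues_eq_of_eq_conj_diagonal {M V : Matrix ι ι ℂ} (hM : M.IsHermitian)
    (hV : V ∈ unitaryGroup ι ℂ) {d : ι → ℝ} (hMd : M = V * diagonal (fun i => (d i : ℂ)) * star V) :
    univ.val.map hM.eigenvalues = univ.val.map d := by
  have hchar : M.charpoly = ∏ i, (Polynomial.X - Polynomial.C (d i : ℂ)) :=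
    hMd ▸ charpoly_conj_diagonal hV d
  have hroots := hM.roots_charpoly_eq_eigenvalues
  rw [hchar, Polynomial.roots_prod _ _
    (prod_ne_zero_iff.2 fun i _ => Polynomial.X_sub_C_ne_zero _)] at hroots
  simp only [Polynomial.roots_X_sub_C, Multiset.bind_singleton] at hroots
  refine Multiset.map_injective Complex.ofReal_injective ?_
  rw [Multiset.map_map, Multiset.map_map]
  exact hroots.symm

lemma vnEntropy_of_isHermitian {A : Matrix ι ι ℂ} (hA : A.IsHermitian) :
    vnEntropy A = ∑ i, negMulLog (hA.eigenvalues i) :=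
  dif_pos hA

lemma vnEntropy_conj_diagonal {M V : Matrix ι ι ℂ} (hV : V ∈ unitaryGroup ι ℂ) {d : ι → ℝ}
    (hMd : M = V * diagonal (fun i => (d i : ℂ)) * star V) :
    vnEntropy M = ∑ i, negMulLog (d i) := by
  have hM : M.IsHermitian := by
    rw [hMd, star_eq_conjTranspose]
    exact isHermitian_mul_mul_conjTranspose V
      (isHermitian_diagonal_of_self_adjoint _ (by ext i; simp))
  have h := congr_arg (fun s => (s.map negMulLog).sum)
    (map_eigenvalues_eq_of_eq_conj_diagonal hM hV hMd)
  rw [vnEntropy_of_isHermitian hM]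
  rwa [Multiset.map_map, Multiset.map_map] at h

end Spectrum

section PartialTrace

variable {k₁ k₂ : Type*}

lemma ptraceR_eq_sum_submatrix [Fintype k₂] (D : Matrix (k₁ × k₂) (k₁ × k₂) ℂ) :
    ptraceR D = ∑ s, D.submatrix (·, s) (·, s) := by
  ext i j
  simp [ptraceR, Matrix.sum_apply]

lemma ptraceL_eq_ptraceR_submatrix [Fintype k₁] (D : Matrix (k₁ × k₂) (k₁ × k₂) ℂ) :
    ptraceL D = ptraceR (D.submatrix Prod.swap Prod.swap) := rfl

lemma ptraceR_posSemidef [Fintype k₂] {D : Matrix (k₁ × k₂) (k₁ × k₂) ℂ}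
    (hD : D.PosSemidef) : (ptraceR D).PosSemidef := by
  rw [ptraceR_eq_sum_submatrix]
  exact posSemidef_sum _ fun s _ => hD.submatrix _

lemma ptraceL_posSemidef [Fintype k₁] {D : Matrix (k₁ × k₂) (k₁ × k₂) ℂ}
    (hD : D.PosSemidef) : (ptraceL D).PosSemidef := by
  rw [ptraceL_eq_ptraceR_submatrix]
  exact ptraceR_posSemidef (hD.submatrix Prod.swap)

variable [Fintype k₁] [Fintype k₂]

lemma trace_ptraceR (D : Matrix (k₁ × k₂) (k₁ × k₂) ℂ) : (ptraceR D).trace = D.trace := by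
  simp [trace, ptraceR, Fintype.sum_prod_type]

lemma trace_ptraceL (D : Matrix (k₁ × k₂) (k₁ × k₂) ℂ) : (ptraceL D).trace = D.trace := by
  rw [trace, trace, Fintype.sum_prod_type, sum_comm]
  simp [ptraceL]

lemma ptraceR_conj_kronecker [DecidableEq k₂] (D : Matrix (k₁ × k₂) (k₁ × k₂) ℂ)
    (A : Matrix k₁ k₁ ℂ) {B : Matrix k₂ k₂ ℂ} (hB : B ∈ unitaryGroup k₂ ℂ) :
    ptraceR (star (A ⊗ₖ B) * D * (A ⊗ₖ B)) = star A * ptraceR D * A := by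
  have hBB (a b : k₂) : ∑ s, star (B a s) * B b s = if b = a then 1 else 0 := by
    rw [← one_apply, ← mem_unitaryGroup_iff.1 hB, mul_apply]
    exact sum_congr rfl fun s _ => mul_comm _ _
  ext i j
  simp only [ptraceR, of_apply, mul_apply, star_apply, kroneckerMap_apply, star_mul', sum_mul]
  calc _ = ∑ b : k₁ × k₂, ∑ a : k₁ × k₂,
        star (A a.1 i) * D a b * A b.1 j * if b.2 = a.2 then 1 else 0 := by
        rw [sum_comm]
        refine sum_congr rfl fun b _ => ?_
        rw [sum_comm]
        refine sum_congr rfl fun a _ => ?_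
        rw [← hBB, mul_sum]
        exact sum_congr rfl fun s _ => by ring
    _ = _ := by
        simp only [mul_ite, mul_one, mul_zero, Fintype.sum_prod_type]
        refine sum_congr rfl fun b₁ _ => ?_
        rw [sum_comm]
        refine sum_congr rfl fun a₁ _ => ?_
        simp [sum_ite_eq, mul_sum, sum_mul]

lemma ptraceL_conj_kronecker [DecidableEq k₁] (D : Matrix (k₁ × k₂) (k₁ × k₂) ℂ)
    {A : Matrix k₁ k₁ ℂ} (hA : A ∈ unitaryGroup k₁ ℂ) (B : Matrix k₂ k₂ ℂ) :
    ptraceL (star (A ⊗ₖ B) * D * (A ⊗ₖ B)) = star B * ptraceL D * B := by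
  have hswap : (A ⊗ₖ B).submatrix (Equiv.prodComm k₂ k₁) (Equiv.prodComm k₂ k₁) = B ⊗ₖ A := by
    ext; simp [mul_comm]
  rw [ptraceL_eq_ptraceR_submatrix, ptraceL_eq_ptraceR_submatrix,
    ← ptraceR_conj_kronecker _ B hA, ← hswap]
  simp only [← submatrix_mul_equiv _ _ _ (Equiv.prodComm k₂ k₁) _]
  rfl

end PartialTrace

section Marginals

variable {k₁ k₂ : Type*} [Fintype k₁] [Fintype k₂]

lemma sum_negMulLog_eq_neg {ι : Type*} [Fintype ι] (f : ι → ℝ) :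
    ∑ i, negMulLog (f i) = -∑ i, f i * log (f i) := by
  simp [negMulLog, sum_neg_distrib]

lemma sum_negMulLog_mul {a : k₁ → ℝ} {b : k₂ → ℝ} (ha : ∑ i, a i = 1) (hb : ∑ j, b j = 1) :
    ∑ x : k₁ × k₂, negMulLog (a x.1 * b x.2) =
      ∑ i, negMulLog (a i) + ∑ j, negMulLog (b j) := by
  simp only [negMulLog_mul, Fintype.sum_prod_type, sum_add_distrib, ← sum_mul, ← mul_sum, hb, ha,
    one_mul]

variable {r : k₁ × k₂ → ℝ} (hr : 0 ≤ r) {a : k₁ → ℝ} {b : k₂ → ℝ}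
  (hra : ∀ i, ∑ j, r (i, j) = a i) (hrb : ∀ j, ∑ i, r (i, j) = b j)
include hr hra hrb

lemma eq_zero_of_marginal_mul_eq_zero (x : k₁ × k₂) (h : a x.1 * b x.2 = 0) : r x = 0 := by
  refine le_antisymm ?_ (hr x)
  rcases mul_eq_zero.1 h with h | h
  · exact (single_le_sum (fun j _ => hr (x.1, j)) (mem_univ x.2)).trans_eq ((hra x.1).trans h)
  · exact (single_le_sum (fun i _ => hr (i, x.2)) (mem_univ x.1)).trans_eq ((hrb x.2).trans h)

lemma sum_mul_log_mul_of_marginals :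
    ∑ x, r x * log (a x.1 * b x.2) = ∑ i, a i * log (a i) + ∑ j, b j * log (b j) := by
  have hsplit (x : k₁ × k₂) :
      r x * log (a x.1 * b x.2) = r x * log (a x.1) + r x * log (b x.2) := by
    by_cases hx : a x.1 * b x.2 = 0
    · simp [eq_zero_of_marginal_mul_eq_zero hr hra hrb x hx]
    rw [log_mul (left_ne_zero_of_mul hx) (right_ne_zero_of_mul hx), mul_add]
  simp only [hsplit, sum_add_distrib, Fintype.sum_prod_type, ← sum_mul, hra]
  rw [sum_comm]
  simp only [← sum_mul, hrb]

end Marginals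

section Subadditivity

variable {k₁ k₂ : Type*} [Fintype k₁] [Fintype k₂] [DecidableEq k₁] [DecidableEq k₂]

lemma conj_diagonal_kronecker (U : Matrix k₁ k₁ ℂ) (V : Matrix k₂ k₂ ℂ) (a : k₁ → ℝ)
    (b : k₂ → ℝ) :
    (U * diagonal (fun i => (a i : ℂ)) * star U) ⊗ₖ (V * diagonal (fun j => (b j : ℂ)) * star V) =
      (U ⊗ₖ V) * diagonal (fun x => ((a x.1 * b x.2 : ℝ) : ℂ)) * star (U ⊗ₖ V) := by
  rw [star_eq_conjTranspose, star_eq_conjTranspose, star_eq_conjTranspose,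
    conjTranspose_kronecker, mul_kronecker_mul, mul_kronecker_mul, diagonal_kronecker_diagonal]
  push_cast
  rfl

lemma kronecker_eq_conj_diagonal {A : Matrix k₁ k₁ ℂ} {B : Matrix k₂ k₂ ℂ}
    (hA : A.IsHermitian) (hB : B.IsHermitian) :
    A ⊗ₖ B =
      ((hA.eigenvectorUnitary : Matrix k₁ k₁ ℂ) ⊗ₖ (hB.eigenvectorUnitary : Matrix k₂ k₂ ℂ)) *
        diagonal (fun x => ((hA.eigenvalues x.1 * hB.eigenvalues x.2 : ℝ) : ℂ)) *
        star ((hA.eigenvectorUnitary : Matrix k₁ k₁ ℂ) ⊗ₖ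
          (hB.eigenvectorUnitary : Matrix k₂ k₂ ℂ)) := by
  rw [← conj_diagonal_kronecker]
  conv_lhs => rw [hA.spectral_theorem, hB.spectral_theorem]
  rfl

theorem vnEntropy_kronecker {A : Matrix k₁ k₁ ℂ} {B : Matrix k₂ k₂ ℂ} (hA : A.IsHermitian)
    (hB : B.IsHermitian) (hA₁ : A.trace = 1) (hB₁ : B.trace = 1) :
    vnEntropy (A ⊗ₖ B) = vnEntropy A + vnEntropy B := by
  rw [vnEntropy_conj_diagonal (kronecker_mem_unitary hA.eigenvectorUnitary.2
      hB.eigenvectorUnitary.2) (kronecker_eq_conj_diagonal hA hB),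
    sum_negMulLog_mul (sum_eigenvalues_eq_one hA hA₁) (sum_eigenvalues_eq_one hB hB₁),
    vnEntropy_of_isHermitian hA, vnEntropy_of_isHermitian hB]

variable {D : Matrix (k₁ × k₂) (k₁ × k₂) ℂ} {UA : Matrix k₁ k₁ ℂ} {UB : Matrix k₂ k₂ ℂ}

lemma sum_re_conj_kronecker_apply_left (hUB : UB ∈ unitaryGroup k₂ ℂ) {a : k₁ → ℝ}
    (ha : star UA * ptraceR D * UA = diagonal (fun i => (a i : ℂ))) (i : k₁) :
    ∑ j, ((star (UA ⊗ₖ UB) * D * (UA ⊗ₖ UB)) (i, j) (i, j)).re = a i := by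
  have h := congr_fun₂ ((ptraceR_conj_kronecker D UA hUB).trans ha) i i
  rw [ptraceR, of_apply, diagonal_apply_eq] at h
  rw [← Complex.re_sum, h, Complex.ofReal_re]

lemma sum_re_conj_kronecker_apply_right (hUA : UA ∈ unitaryGroup k₁ ℂ) {b : k₂ → ℝ}
    (hb : star UB * ptraceL D * UB = diagonal (fun j => (b j : ℂ))) (j : k₂) :
    ∑ i, ((star (UA ⊗ₖ UB) * D * (UA ⊗ₖ UB)) (i, j) (i, j)).re = b j := by
  have h := congr_fun₂ ((ptraceL_conj_kronecker D hUA UB).trans hb) j j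
  rw [ptraceL, of_apply, diagonal_apply_eq] at h
  rw [← Complex.re_sum, h, Complex.ofReal_re]

theorem vnEntropy_le_add_ptrace_and_eq_kronecker (hD : IsDensityMatrix D) :
    vnEntropy D ≤ vnEntropy (ptraceR D) + vnEntropy (ptraceL D) ∧
      (vnEntropy D = vnEntropy (ptraceR D) + vnEntropy (ptraceL D) →
        D = ptraceR D ⊗ₖ ptraceL D) := by
  obtain ⟨hD₀, hD₁⟩ := hD
  have hA := ptraceR_posSemidef hD₀
  have hB := ptraceL_posSemidef hD₀
  set V := (hA.1.eigenvectorUnitary : Matrix k₁ k₁ ℂ) ⊗ₖ (hB.1.eigenvectorUnitary : Matrix k₂ k₂ ℂ)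
  have hU := hD₀.1.eigenvectorUnitary.2
  have hV := kronecker_mem_unitary hA.1.eigenvectorUnitary.2 hB.1.eigenvectorUnitary.2
  set r : k₁ × k₂ → ℝ := fun x => ((star V * D * V) x x).re
  have hr : 0 ≤ r := fun x =>
    (Complex.nonneg_iff.1 (hD₀.conjTranspose_mul_mul_same V).diag_nonneg).1
  have hra := sum_re_conj_kronecker_apply_left hB.1.eigenvectorUnitary.2
    (star_eigenvectorUnitary_mul_mul hA.1)
  have hrb := sum_re_conj_kronecker_apply_right hA.1.eigenvectorUnitary.2
    (star_eigenvectorUnitary_mul_mul hB.1)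
  have hq : 0 ≤ fun x : k₁ × k₂ => hA.1.eigenvalues x.1 * hB.1.eigenvalues x.2 :=
    fun x => mul_nonneg (hA.eigenvalues_nonneg x.1) (hB.eigenvalues_nonneg x.2)
  have hpq : ∑ x, hD₀.1.eigenvalues x =
      ∑ x : k₁ × k₂, hA.1.eigenvalues x.1 * hB.1.eigenvalues x.2 := by
    rw [Fintype.sum_prod_type (f := fun x => _ * _), ← Fintype.sum_mul_sum,
      sum_eigenvalues_eq_one hD₀.1 hD₁, sum_eigenvalues_eq_one hA.1 ((trace_ptraceR D).trans hD₁),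
      sum_eigenvalues_eq_one hB.1 ((trace_ptraceL D).trans hD₁), one_mul]
  have hsupp := eq_zero_of_marginal_mul_eq_zero hr hra hrb
  have hle := sum_re_conj_mul_log_le hU hV hD₀.eigenvalues_nonneg hq hpq
    hD₀.1.spectral_theorem hsupp
  have heq := eq_conj_diagonal_of_sum_re_conj_mul_log_eq hU hV hD₀.eigenvalues_nonneg hq hpq
    hD₀.1.spectral_theorem hsupp
  rw [sum_mul_log_mul_of_marginals hr hra hrb] at hle heq
  rw [vnEntropy_of_isHermitian hD₀.1, vnEntropy_of_isHermitian hA.1, vnEntropy_of_isHermitian hB.1,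
    sum_negMulLog_eq_neg, sum_negMulLog_eq_neg, sum_negMulLog_eq_neg,
    kronecker_eq_conj_diagonal hA.1 hB.1]
  exact ⟨by linarith, fun h => heq (by linarith)⟩

end Subadditivity

/-- subadditivity of von Neumann entropy (nonnegativity of the mutual
entropy), with equality exactly for product states. -/
theorem vnEntropy_subadditive {m n : ℕ}
    (D : Matrix (Fin m × Fin n) (Fin m × Fin n) ℂ) (hD : IsDensityMatrix D) :
    vnEntropy D ≤ vnEntropy (ptraceR D) + vnEntropy (ptraceL D) ∧
    (vnEntropy D = vnEntropy (ptraceR D) + vnEntropy (ptraceL D) ↔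
      D = ptraceR D ⊗ₖ ptraceL D) := by
  obtain ⟨hle, heq⟩ := vnEntropy_le_add_ptrace_and_eq_kronecker hD
  refine ⟨hle, heq, fun hprod => ?_⟩
  have hA := ptraceR_posSemidef hD.1
  have hB := ptraceL_posSemidef hD.1
  calc vnEntropy D = vnEntropy (ptraceR D ⊗ₖ ptraceL D) := by rw [← hprod]
    _ = vnEntropy (ptraceR D) + vnEntropy (ptraceL D) :=
      vnEntropy_kronecker hA.1 hB.1 ((trace_ptraceR D).trans hD.2) ((trace_ptraceL D).trans hD.2)

end TAL
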